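/- Under the stated setup, for every λ ∈ ℝ^n with Z_λ finite and every γ ∈ ℝ^n with Z_{γ+λ} finite, the auxiliary function is a lower bound on the incomplete-data log-likelihood difference: A(γ, λ) ≤ L(γ + λ) − L(λ). -/

import Mathlib

/- Common setup: log-linear models over proof trees (complete data X) and
   queries (incomplete data Y). -/

variable {X Y : Type*}

/-- `ν_#(x) = ∑ i, ν_i(x)`. -/
def nuSharp {n : ℕ} (ν : Fin n → X → ℕ) (x : X) : ℕ := ∑ i, ν i x

/-- weighted property sum `λ·ν(x)`. -/
noncomputable def wdot {n : ℕ} (l : Fin n → ℝ) (ν : Fin n → X → ℕ) (x : X) : ℝ :=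
  ∑ i, l i * (ν i x : ℝ)

/-- normalizing constant `Z_λ`. -/
noncomputable def Zpart (p0 : X → ℝ) {n : ℕ} (ν : Fin n → X → ℕ) (l : Fin n → ℝ) : ℝ :=
  ∑' x : X, Real.exp (wdot l ν x) * p0 x

/-- log-linear distribution `p_λ(x)`. -/
noncomputable def pLL (p0 : X → ℝ) {n : ℕ} (ν : Fin n → X → ℕ) (l : Fin n → ℝ) (x : X) : ℝ :=
  (Zpart p0 ν l)⁻¹ * Real.exp (wdot l ν x) * p0 x

/-- incomplete-data probability `p_λ(y) = ∑_{x ∈ X(y)} p_λ(x)`. -/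
noncomputable def pLLY (Yf : X → Y) (p0 : X → ℝ) {n : ℕ} (ν : Fin n → X → ℕ)
    (l : Fin n → ℝ) (y : Y) : ℝ :=
  ∑' x : {x : X // Yf x = y}, pLL p0 ν l x.1

/-- incomplete-data log-likelihood `L(λ) = ∑_{y ∈ 𝒴} ln p_λ(y)`. -/
noncomputable def LL (Yf : X → Y) (p0 : X → ℝ) {n : ℕ} (ν : Fin n → X → ℕ)
    (𝒴 : Multiset Y) (l : Fin n → ℝ) : ℝ :=
  (𝒴.map fun y => Real.log (pLLY Yf p0 ν l y)).sum

/-- expectation `p_λ[f]`. -/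
noncomputable def pExp (p0 : X → ℝ) {n : ℕ} (ν : Fin n → X → ℕ) (l : Fin n → ℝ)
    (f : X → ℝ) : ℝ :=
  ∑' x : X, pLL p0 ν l x * f x

/-- conditional expectation `k_λ[f]` given observed `y`. -/
noncomputable def kExp (Yf : X → Y) (p0 : X → ℝ) {n : ℕ} (ν : Fin n → X → ℕ)
    (l : Fin n → ℝ) (y : Y) (f : X → ℝ) : ℝ :=
  ∑' x : {x : X // Yf x = y}, (pLL p0 ν l x.1 / pLLY Yf p0 ν l y) * f x.1

/-- auxiliary function
`A(γ,λ) = ∑_{y∈𝒴} (1 + k_λ[γ·ν] − p_λ[∑ i, ν̄_i e^{γ_i ν_#}])`. -/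
noncomputable def Aaux (Yf : X → Y) (p0 : X → ℝ) {n : ℕ} (ν : Fin n → X → ℕ)
    (𝒴 : Multiset Y) (γ l : Fin n → ℝ) : ℝ :=
  (𝒴.map fun y =>
    1 + kExp Yf p0 ν l y (fun x => wdot γ ν x)
      - pExp p0 ν l (fun x =>
          ∑ i, ((ν i x : ℝ) / (nuSharp ν x : ℝ)) * Real.exp (γ i * (nuSharp ν x : ℝ)))).sum


/-!
Write `P = p_λ(y)`, `Q = p_{γ+λ}(y)` and `r = Z_{γ+λ} / Z_λ`. Since
`p_λ(x) e^{γ·ν(x)} = r p_{γ+λ}(x)`, we have `k_λ[e^{γ·ν}] = r Q / P` and `p_λ[e^{γ·ν}] = r`.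
Jensen's inequality for the concave logarithm gives `k_λ[γ·ν] ≤ ln r + ln Q - ln P`, while
`ln r ≤ r - 1 = p_λ[e^{γ·ν}] - 1 ≤ p_λ[∑ i, ν̄_i e^{γ_i ν_#}] - 1`, the last step being Jensen's
inequality for `exp` with the weights `ν̄_i(x)`, which sum to one. Adding up over `y ∈ 𝒴`
gives the claim.
-/

open Real

theorem Real.tsum_mul_le_log_tsum_mul_exp {ι : Type*} {w f : ι → ℝ} (hw : ∀ i, 0 ≤ w i)
    (hw1 : HasSum w 1) (hf : Summable fun i => w i * f i)
    (hexp : Summable fun i => w i * exp (f i)) :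
    ∑' i, w i * f i ≤ log (∑' i, w i * exp (f i)) := by
  set T := ∑' i, w i * exp (f i)
  obtain ⟨i, hi⟩ : ∃ i, 0 < w i := by
    by_contra! h
    have hw0 : w = 0 := funext fun i => le_antisymm (h i) (hw i)
    rw [hw0] at hw1
    exact one_ne_zero (hw1.unique hasSum_zero)
  have hT : 0 < T :=
    hexp.tsum_pos (fun j => mul_nonneg (hw j) (exp_pos _).le) i (mul_pos hi (exp_pos _))
  -- the tangent line of `log` at `T`
  have tangent : ∀ j, w j * f j ≤ w j * log T + w j * exp (f j) / T - w j := by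
    intro j
    have h := mul_le_mul_of_nonneg_left (add_one_le_exp (f j - log T)) (hw j)
    rw [exp_sub, exp_log hT] at h
    calc w j * f j = w j * (f j - log T + 1) + w j * log T - w j := by ring
      _ ≤ w j * (exp (f j) / T) + w j * log T - w j := by gcongr
      _ = _ := by ring
  have hwlog : Summable fun j => w j * log T := hw1.summable.mul_right _
  have hwexp : Summable fun j => w j * exp (f j) / T := hexp.div_const T
  calc ∑' i, w i * f i ≤ ∑' j, (w j * log T + w j * exp (f j) / T - w j) :=
        Summable.tsum_le_tsum tangent hf ((hwlog.add hwexp).sub hw1.summable)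
    _ = log T := by
      rw [Summable.tsum_sub (hwlog.add hwexp) hw1.summable, Summable.tsum_add hwlog hwexp,
        tsum_mul_right, tsum_div_const, hw1.tsum_eq, div_self hT.ne']
      ring

noncomputable def weightedExpSum {n : ℕ} (γ : Fin n → ℝ) (ν : Fin n → X → ℕ) (x : X) : ℝ :=
  ∑ i, ((ν i x : ℝ) / (nuSharp ν x : ℝ)) * exp (γ i * (nuSharp ν x : ℝ))

section LogLinear

variable {n : ℕ} {ν : Fin n → X → ℕ} {p0 : X → ℝ}

lemma wdot_add (γ l : Fin n → ℝ) (x : X) : wdot (γ + l) ν x = wdot γ ν x + wdot l ν x := by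
  simp [wdot, add_mul, Finset.sum_add_distrib]

lemma exp_wdot_le_weightedExpSum (γ : Fin n → ℝ) {x : X} (hν : 1 ≤ nuSharp ν x) :
    exp (wdot γ ν x) ≤ weightedExpSum γ ν x := by
  have hm : (0 : ℝ) < nuSharp ν x := by exact_mod_cast hν
  have hw1 : ∑ i, ((ν i x : ℝ) / (nuSharp ν x : ℝ)) = 1 := by
    rw [← Finset.sum_div, div_eq_one_iff_eq hm.ne']
    push_cast [nuSharp]
    rfl
  have hwdot : wdot γ ν x = ∑ i, ((ν i x : ℝ) / nuSharp ν x) * (γ i * nuSharp ν x) := by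
    unfold wdot
    refine Finset.sum_congr rfl fun i _ => ?_
    field_simp
  rw [hwdot, weightedExpSum]
  simpa only [smul_eq_mul] using convexOn_exp.map_sum_le (t := Finset.univ)
    (fun i _ => by positivity) hw1 (fun i _ => Set.mem_univ (γ i * nuSharp ν x))

lemma pLL_eq_inv_mul (l : Fin n → ℝ) (x : X) :
    pLL p0 ν l x = (Zpart p0 ν l)⁻¹ * (exp (wdot l ν x) * p0 x) := by
  rw [pLL, mul_assoc]

lemma pLL_mul_exp_wdot (γ l : Fin n → ℝ) (x : X) :
    pLL p0 ν l x * exp (wdot γ ν x) = (Zpart p0 ν l)⁻¹ * (exp (wdot (γ + l) ν x) * p0 x) := by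
  rw [pLL, wdot_add, exp_add]
  ring

lemma Zpart_pos [Nonempty X] (hp0 : ∀ x, 0 < p0 x) {l : Fin n → ℝ}
    (hZ : Summable fun x => exp (wdot l ν x) * p0 x) : 0 < Zpart p0 ν l :=
  hZ.tsum_pos (fun x => (mul_pos (exp_pos _) (hp0 x)).le) (Classical.arbitrary X)
    (mul_pos (exp_pos _) (hp0 _))

lemma summable_pLL {l : Fin n → ℝ} (hZ : Summable fun x => exp (wdot l ν x) * p0 x) :
    Summable (pLL p0 ν l) :=
  (hZ.mul_left _).congr fun x => (pLL_eq_inv_mul l x).symm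

lemma pLL_pos (hp0 : ∀ x, 0 < p0 x) {l : Fin n → ℝ}
    (hZ : Summable fun x => exp (wdot l ν x) * p0 x) (x : X) : 0 < pLL p0 ν l x := by
  have : Nonempty X := ⟨x⟩
  have hZpos := Zpart_pos hp0 hZ
  have hpx := hp0 x
  rw [pLL]
  positivity

lemma pExp_exp_wdot (γ l : Fin n → ℝ) :
    pExp p0 ν l (fun x => exp (wdot γ ν x)) = Zpart p0 ν (γ + l) / Zpart p0 ν l := by
  simp only [pExp, pLL_mul_exp_wdot, tsum_mul_left]
  rw [div_eq_inv_mul]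
  rfl

lemma Zpart_div_le_pExp_weightedExpSum (hp0 : ∀ x, 0 < p0 x) (hν : ∀ x, 1 ≤ nuSharp ν x)
    {γ l : Fin n → ℝ} (hZl : Summable fun x => exp (wdot l ν x) * p0 x)
    (hZgl : Summable fun x => exp (wdot (γ + l) ν x) * p0 x)
    (hpsum : Summable fun x => pLL p0 ν l x * weightedExpSum γ ν x) :
    Zpart p0 ν (γ + l) / Zpart p0 ν l ≤ pExp p0 ν l (weightedExpSum γ ν) := by
  rw [← pExp_exp_wdot]
  refine Summable.tsum_le_tsum (fun x => ?_) ?_ hpsum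
  · exact mul_le_mul_of_nonneg_left (exp_wdot_le_weightedExpSum γ (hν x))
      (pLL_pos hp0 hZl x).le
  · exact (hZgl.mul_left _).congr fun x => (pLL_mul_exp_wdot γ l x).symm

variable {Yf : X → Y}

lemma exists_eq_of_pLLY_pos {l : Fin n → ℝ} {y : Y} (hP : 0 < pLLY Yf p0 ν l y) :
    ∃ x, Yf x = y := by
  by_contra! h
  have : IsEmpty {x : X // Yf x = y} := ⟨fun x => h x.1 x.2⟩
  rw [pLLY, tsum_empty] at hP
  exact hP.false

lemma pLLY_pos (hp0 : ∀ x, 0 < p0 x) {l : Fin n → ℝ}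
    (hZ : Summable fun x => exp (wdot l ν x) * p0 x) {x : X} {y : Y} (hx : Yf x = y) :
    0 < pLLY Yf p0 ν l y :=
  ((summable_pLL hZ).comp_injective Subtype.val_injective).tsum_pos
    (fun x => (pLL_pos hp0 hZ x.1).le) ⟨x, hx⟩ (pLL_pos hp0 hZ x)

lemma tsum_fiber_pLL_mul_exp_wdot {γ l : Fin n → ℝ} (hZ : Zpart p0 ν (γ + l) ≠ 0) (y : Y) :
    ∑' x : {x : X // Yf x = y}, pLL p0 ν l x.1 * exp (wdot γ ν x.1)
      = Zpart p0 ν (γ + l) / Zpart p0 ν l * pLLY Yf p0 ν (γ + l) y := by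
  simp only [pLLY, pLL_mul_exp_wdot, pLL_eq_inv_mul (γ + l), tsum_mul_left]
  field_simp

lemma kExp_wdot_le_log (hp0 : ∀ x, 0 < p0 x) {γ l : Fin n → ℝ} {y : Y}
    (hZl : Summable fun x => exp (wdot l ν x) * p0 x)
    (hZgl : Summable fun x => exp (wdot (γ + l) ν x) * p0 x) (hP : 0 < pLLY Yf p0 ν l y)
    (hk : Summable fun x : {x : X // Yf x = y} =>
      (pLL p0 ν l x.1 / pLLY Yf p0 ν l y) * wdot γ ν x.1) :
    kExp Yf p0 ν l y (wdot γ ν) ≤ log (Zpart p0 ν (γ + l) / Zpart p0 ν l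
      * pLLY Yf p0 ν (γ + l) y / pLLY Yf p0 ν l y) := by
  obtain ⟨x₀, -⟩ := exists_eq_of_pLLY_pos hP
  have : Nonempty X := ⟨x₀⟩
  have hfiber : Summable fun x : {x : X // Yf x = y} => pLL p0 ν l x.1 :=
    (summable_pLL hZl).comp_injective Subtype.val_injective
  have hw1 : HasSum (fun x : {x : X // Yf x = y} => pLL p0 ν l x.1 / pLLY Yf p0 ν l y) 1 := by
    have h := (hfiber.div_const (pLLY Yf p0 ν l y)).hasSum
    rwa [tsum_div_const, ← pLLY, div_self hP.ne'] at h
  have hexp : Summable fun x : {x : X // Yf x = y} =>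
      pLL p0 ν l x.1 / pLLY Yf p0 ν l y * exp (wdot γ ν x.1) :=
    (((hZgl.comp_injective Subtype.val_injective).mul_left (Zpart p0 ν l)⁻¹).div_const
      (pLLY Yf p0 ν l y)).congr fun x => by
        rw [div_mul_eq_mul_div, pLL_mul_exp_wdot]
        rfl
  calc kExp Yf p0 ν l y (wdot γ ν)
      = ∑' x : {x : X // Yf x = y}, pLL p0 ν l x.1 / pLLY Yf p0 ν l y * wdot γ ν x.1 := rfl
    _ ≤ log (∑' x : {x : X // Yf x = y},
          pLL p0 ν l x.1 / pLLY Yf p0 ν l y * exp (wdot γ ν x.1)) :=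
      Real.tsum_mul_le_log_tsum_mul_exp (fun x => div_nonneg (pLL_pos hp0 hZl x.1).le hP.le)
        hw1 hk hexp
    _ = _ := by
      simp only [div_mul_eq_mul_div _ (pLLY Yf p0 ν l y), tsum_div_const]
      rw [tsum_fiber_pLL_mul_exp_wdot (Zpart_pos hp0 hZgl).ne']

lemma one_add_kExp_sub_pExp_le_log_sub_log (hp0 : ∀ x, 0 < p0 x) (hν : ∀ x, 1 ≤ nuSharp ν x)
    {γ l : Fin n → ℝ} {y : Y}
    (hZl : Summable fun x => exp (wdot l ν x) * p0 x)
    (hZgl : Summable fun x => exp (wdot (γ + l) ν x) * p0 x) (hP : 0 < pLLY Yf p0 ν l y)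
    (hk : Summable fun x : {x : X // Yf x = y} =>
      (pLL p0 ν l x.1 / pLLY Yf p0 ν l y) * wdot γ ν x.1)
    (hpsum : Summable fun x => pLL p0 ν l x * weightedExpSum γ ν x) :
    1 + kExp Yf p0 ν l y (wdot γ ν) - pExp p0 ν l (weightedExpSum γ ν)
      ≤ log (pLLY Yf p0 ν (γ + l) y) - log (pLLY Yf p0 ν l y) := by
  obtain ⟨x₀, hx₀⟩ := exists_eq_of_pLLY_pos hP
  have : Nonempty X := ⟨x₀⟩
  have hr : 0 < Zpart p0 ν (γ + l) / Zpart p0 ν l :=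
    div_pos (Zpart_pos hp0 hZgl) (Zpart_pos hp0 hZl)
  have hQ : 0 < pLLY Yf p0 ν (γ + l) y := pLLY_pos hp0 hZgl hx₀
  have hkExp := kExp_wdot_le_log hp0 hZl hZgl hP hk
  rw [log_div (mul_pos hr hQ).ne' hP.ne', log_mul hr.ne' hQ.ne'] at hkExp
  have hlog := log_le_sub_one_of_pos hr
  have hpExp := Zpart_div_le_pExp_weightedExpSum hp0 hν hZl hZgl hpsum
  linarith

end LogLinear

theorem auxiliary_lower_bound_general
    {X Y : Type*} (Yf : X → Y)
    (p0 : X → ℝ) (hp0 : ∀ x, 0 < p0 x)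
    {n : ℕ} (ν : Fin n → X → ℕ) (hν : ∀ x, 1 ≤ nuSharp ν x)
    (𝒴 : Multiset Y) (l γ : Fin n → ℝ)
    (hZl : Summable fun x : X => Real.exp (wdot l ν x) * p0 x)
    (hZgl : Summable fun x : X => Real.exp (wdot (γ + l) ν x) * p0 x)
    (hpos : ∀ y ∈ 𝒴, 0 < pLLY Yf p0 ν l y)
    (hksum : ∀ y ∈ 𝒴, Summable fun x : {x : X // Yf x = y} =>
      (pLL p0 ν l x.1 / pLLY Yf p0 ν l y) * wdot γ ν x.1)
    (hpsum : Summable fun x : X => pLL p0 ν l x *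
      ∑ i, ((ν i x : ℝ) / (nuSharp ν x : ℝ)) * Real.exp (γ i * (nuSharp ν x : ℝ))) :
    Aaux Yf p0 ν 𝒴 γ l ≤ LL Yf p0 ν 𝒴 (γ + l) - LL Yf p0 ν 𝒴 l := by
  rw [LL, LL, ← Multiset.sum_map_sub, Aaux]
  exact Multiset.sum_map_le_sum_map _ _ fun y hy =>
    one_add_kExp_sub_pExp_le_log_sub_log hp0 hν hZl hZgl (hpos y hy) (hksum y hy) hpsum

/-- Lemma 1: `A(γ,λ) ≤ L(γ+λ) − L(λ)`. -/
theorem auxiliary_lower_bound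
    {X Y : Type*} [Countable X] (Yf : X → Y)
    (p0 : X → ℝ) (hp0 : ∀ x, 0 < p0 x) (hp0sum : ∑' x : X, p0 x = 1)
    {n : ℕ} (ν : Fin n → X → ℕ) (hν : ∀ x, 1 ≤ nuSharp ν x)
    (𝒴 : Multiset Y) (l γ : Fin n → ℝ)
    (hZl : Summable fun x : X => Real.exp (wdot l ν x) * p0 x)
    (hZgl : Summable fun x : X => Real.exp (wdot (γ + l) ν x) * p0 x)
    (hpos : ∀ y ∈ 𝒴, 0 < pLLY Yf p0 ν l y)
    (hksum : ∀ y ∈ 𝒴, Summable fun x : {x : X // Yf x = y} =>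
      (pLL p0 ν l x.1 / pLLY Yf p0 ν l y) * wdot γ ν x.1)
    (hpsum : Summable fun x : X => pLL p0 ν l x *
      ∑ i, ((ν i x : ℝ) / (nuSharp ν x : ℝ)) * Real.exp (γ i * (nuSharp ν x : ℝ))) :
    Aaux Yf p0 ν 𝒴 γ l ≤ LL Yf p0 ν 𝒴 (γ + l) - LL Yf p0 ν 𝒴 l :=
  auxiliary_lower_bound_general Yf p0 hp0 ν hν 𝒴 l γ hZl hZgl hpos hksum hpsum
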